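/- arXiv:1607.03426 — 4 statements merged into one kernel-verified Lean document; each statement's English description precedes it below -/
import Mathlib

section
/- Let P ∈ ℝ^{n×n} be symmetric negative definite, U ∈ ℝ^{m×m} symmetric positive definite and block-diagonal U = diag(U₁₁, U₂₂), and W ∈ ℝ^{n×m} of block form W = [[W₁₁, 0],[0, 0]] with W₁₁ an r×r nonsingular block (matching the block structure of U). Then −WᵀP⁻¹W − U⁻¹ is negative semidefinite if and only if P + W U Wᵀ is negative semidefinite. -/
/-!
Both conditions are the positive semidefiniteness of the same block matrix
`[[-P, W], [Wᵀ, U⁻¹]]`, read off through its two Schur complements: the one of the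
positive definite block `-P` is `U⁻¹ + Wᵀ P⁻¹ W`, the one of `U⁻¹` is `-P - W U Wᵀ`.
-/

open Matrix

theorem Matrix.inv_neg {n α : Type*} [Fintype n] [DecidableEq n] [CommRing α]
    (A : Matrix n n α) : (-A)⁻¹ = -A⁻¹ := by
  by_cases h : IsUnit A.det
  · simpa using A.inv_smul' (-1) h
  · have h' : ¬IsUnit (-A).det := by
      rwa [det_neg, IsUnit.mul_iff, not_and_or, or_iff_right (not_not.2 (isUnit_neg_one.pow _))]
    rw [nonsing_inv_apply_not_isUnit _ h, nonsing_inv_apply_not_isUnit _ h', neg_zero]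

namespace Matrix.PosDef

variable {m n K : Type*} [Fintype m] [Fintype n] [DecidableEq m] [DecidableEq n]
  [Field K] [PartialOrder K] [StarRing K] [StarOrderedRing K]

theorem posSemidef_inv_sub_iff {A : Matrix m m K} {D : Matrix n n K} (hA : A.PosDef)
    (hD : D.PosDef) (B : Matrix m n K) :
    (D⁻¹ - Bᴴ * A⁻¹ * B).PosSemidef ↔ (A - B * D * Bᴴ).PosSemidef := by
  have := hA.isUnit.invertible
  have := hD.isUnit.invertible
  have := hD.inv.isUnit.invertible
  rw [← hA.fromBlocks₁₁, hD.inv.fromBlocks₂₂, inv_inv_of_invertible]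

end Matrix.PosDef

theorem block_negSemidef_iff_general (r s t : ℕ)
    (P : Matrix (Fin r ⊕ Fin s) (Fin r ⊕ Fin s) ℝ)
    (U : Matrix (Fin r ⊕ Fin t) (Fin r ⊕ Fin t) ℝ)
    (W : Matrix (Fin r ⊕ Fin s) (Fin r ⊕ Fin t) ℝ)
    (hPneg : (-P).PosDef)
    (hUpos : U.PosDef) :
    (-(-(Wᵀ * P⁻¹ * W) - U⁻¹)).PosSemidef ↔ (-(P + W * U * Wᵀ)).PosSemidef := by
  have h := hPneg.posSemidef_inv_sub_iff hUpos W
  rw [conjTranspose_eq_transpose_of_trivial, Matrix.inv_neg, Matrix.mul_neg, Matrix.neg_mul] at h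
  rwa [neg_sub, neg_add']

/-- Lemma 5 (block matrix equivalence): with `P ≺ 0` symmetric, `U ≻ 0` symmetric block
diagonal, and `W = [[W₁₁,0],[0,0]]` with `W₁₁` nonsingular (matching the block structure
of `U`), the matrix `−Wᵀ P⁻¹ W − U⁻¹` is negative semidefinite if and only if
`P + W U Wᵀ` is negative semidefinite.  (A matrix `M` is negative (semi)definite iff
`-M` is positive (semi)definite.) -/
theorem block_negSemidef_iff (r s t : ℕ)
    (P : Matrix (Fin r ⊕ Fin s) (Fin r ⊕ Fin s) ℝ)
    (U₁₁ : Matrix (Fin r) (Fin r) ℝ) (U₂₂ : Matrix (Fin t) (Fin t) ℝ)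
    (W₁₁ : Matrix (Fin r) (Fin r) ℝ)
    (U : Matrix (Fin r ⊕ Fin t) (Fin r ⊕ Fin t) ℝ)
    (W : Matrix (Fin r ⊕ Fin s) (Fin r ⊕ Fin t) ℝ)
    (hU : U = Matrix.fromBlocks U₁₁ 0 0 U₂₂)
    (hW : W = Matrix.fromBlocks W₁₁ 0 0 0)
    (hP : P.IsHermitian) (hPneg : (-P).PosDef)
    (hUpos : U.PosDef) (hW₁₁ : IsUnit W₁₁) :
    (-(-(Wᵀ * P⁻¹ * W) - U⁻¹)).PosSemidef ↔ (-(P + W * U * Wᵀ)).PosSemidef :=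
  block_negSemidef_iff_general r s t P U W hPneg hUpos
end

section
/- Let G ∈ ℝ^{n×n} be symmetric and invertible, H ∈ ℝ^{m×m} symmetric positive definite, and Z ∈ ℝ^{n×m} with Z invertible (so m = n). If −Zᵀ G⁻¹ Z − H⁻¹ is positive semidefinite, then G + Z H Zᵀ is positive semidefinite. -/
open Matrix

/-- If `G` is symmetric invertible, `H` symmetric positive definite, `Z` invertible,
and `−Zᵀ G⁻¹ Z − H⁻¹ ⪰ 0`, then `G + Z H Zᵀ ⪰ 0`. -/
theorem posSemidef_of_neg_inv_bound (n : ℕ)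
    (G : Matrix (Fin n) (Fin n) ℝ) (H : Matrix (Fin n) (Fin n) ℝ)
    (Z : Matrix (Fin n) (Fin n) ℝ)
    (hG : G.IsHermitian) (hGinv : IsUnit G) (hH : H.PosDef) (hZ : IsUnit Z)
    (h : (-(Zᵀ * G⁻¹ * Z) - H⁻¹).PosSemidef) :
    (G + Z * H * Zᵀ).PosSemidef := by
  have hdZ : IsUnit Z.det := (Matrix.isUnit_iff_isUnit_det Z).mp hZ
  have hdG : IsUnit G.det := (Matrix.isUnit_iff_isUnit_det G).mp hGinv
  have hdH : IsUnit H.det := (Matrix.isUnit_iff_isUnit_det H).mp hH.isUnit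
  set M : Matrix (Fin n) (Fin n) ℝ := Z * H * Zᵀ with hMdef
  have hHsymm : Hᵀ = H := hH.isHermitian.eq
  have hGsymm : Gᵀ = G := hG.eq
  have hMsymm : Mᵀ = M := by
    simp [hMdef, Matrix.transpose_mul, hHsymm, Matrix.mul_assoc]
  have hdM : IsUnit M.det := by
    simp only [hMdef, Matrix.det_mul, Matrix.det_transpose]
    exact (hdZ.mul hdH).mul hdZ
  have hZZ : Z * Z⁻¹ = 1 := Matrix.mul_nonsing_inv Z hdZ
  have hZtZt : Zᵀ⁻¹ * Zᵀ = 1 := Matrix.nonsing_inv_mul Zᵀ (Matrix.isUnit_det_transpose Z hdZ)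
  have hMinv : M⁻¹ = Zᵀ⁻¹ * H⁻¹ * Z⁻¹ := by
    rw [hMdef, Matrix.mul_inv_rev, Matrix.mul_inv_rev, Matrix.mul_assoc]
  have hMps : M.PosSemidef := by
    have := hH.posSemidef.mul_mul_conjTranspose_same Z
    simpa [hMdef] using this
  have hP : (-G⁻¹ - M⁻¹).PosSemidef := by
    have hc := h.mul_mul_conjTranspose_same (Zᵀ)⁻¹
    have he : Zᵀ⁻¹ * (-(Zᵀ * G⁻¹ * Z) - H⁻¹) * (Zᵀ⁻¹)ᴴ = -G⁻¹ - M⁻¹ := by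
      have h1 : (Zᵀ⁻¹)ᴴ = Z⁻¹ := by
        simp [Matrix.conjTranspose_eq_transpose_of_trivial, ← Matrix.transpose_nonsing_inv]
      rw [h1, hMinv]
      rw [Matrix.mul_sub, Matrix.sub_mul, Matrix.mul_neg, Matrix.neg_mul]
      congr 1
      · rw [← Matrix.mul_assoc, ← Matrix.mul_assoc, hZtZt, Matrix.one_mul,
          Matrix.mul_assoc, hZZ, Matrix.mul_one]
    rw [← he]; exact hc
  have hGG : G * G⁻¹ = 1 := Matrix.mul_nonsing_inv G hdG
  have hMM : M * M⁻¹ = 1 := Matrix.mul_nonsing_inv M hdM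
  have hMM' : M⁻¹ * M = 1 := Matrix.nonsing_inv_mul M hdM
  have key : G + M = G * (-G⁻¹ - M⁻¹) * G + (1 + G * M⁻¹) * M * (1 + M⁻¹ * G) := by
    have e1 : G * (-G⁻¹ - M⁻¹) * G = -G - G * M⁻¹ * G := by
      rw [Matrix.mul_sub, Matrix.mul_neg, hGG, Matrix.sub_mul, Matrix.neg_mul,
        Matrix.one_mul]
    have s1 : (1 + G * M⁻¹) * M = M + G := by
      rw [Matrix.add_mul, Matrix.one_mul, Matrix.mul_assoc, hMM', Matrix.mul_one]
    have e2 : (1 + G * M⁻¹) * M * (1 + M⁻¹ * G) = M + G + G + G * M⁻¹ * G := by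
      rw [s1, Matrix.mul_add, Matrix.mul_one, Matrix.add_mul, ← Matrix.mul_assoc,
        ← Matrix.mul_assoc, hMM, Matrix.one_mul]
      abel
    rw [e1, e2]
    abel
  have t1 : (G * (-G⁻¹ - M⁻¹) * G).PosSemidef := by
    have := hP.mul_mul_conjTranspose_same G
    simpa [Matrix.conjTranspose_eq_transpose_of_trivial, hGsymm] using this
  have t2 : ((1 + G * M⁻¹) * M * (1 + M⁻¹ * G)).PosSemidef := by
    have := hMps.mul_mul_conjTranspose_same (1 + G * M⁻¹)
    have he : (1 + G * M⁻¹)ᴴ = 1 + M⁻¹ * G := by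
      have hMi : (M⁻¹)ᵀ = M⁻¹ := by rw [Matrix.transpose_nonsing_inv, hMsymm]
      simp [Matrix.conjTranspose_eq_transpose_of_trivial, Matrix.transpose_mul, hMi, hGsymm]
    rw [he] at this
    exact this
  rw [key]
  exact t1.add t2
end

section
/- Let V : ℝ^m → ℝ be differentiable and convex, Λ : ℝⁿ → ℝ^m with Λ(x) = (½ xᵀ A₁ x, …, ½ xᵀ A_m x) for symmetric matrices A_k, Q(x) = ½ xᵀ C x + fᵀx with C symmetric, and Π(x) = V(Λ(x)) − Q(x). If ζ̄ = ∇V(Λ(x̄)) and G(ζ̄) := Σ_k ζ̄_k A_k − C satisfies G(ζ̄) x̄ = f and G(ζ̄) is positive definite, then x̄ is a global minimizer of Π on ℝⁿ. -/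
open Matrix

/-!
The gradient inequality for `V` at `Λ x̄` bounds `Π x - Π x̄` from below by the difference of the
values at `x` and `x̄` of `ζ̄ ⬝ᵥ Λ x - Q x = ½ xᵀ G(ζ̄) x - fᵀ x`. Since `G(ζ̄)` is positive
semidefinite and `G(ζ̄) x̄ = f`, this quadratic exceeds its value at `x̄` by
`½ (x - x̄)ᵀ G(ζ̄) (x - x̄) ≥ 0`.
-/

theorem ConvexOn.fderiv_apply_sub_le {E : Type*} [NormedAddCommGroup E] [NormedSpace ℝ E]
    {s : Set E} {f : E → ℝ} (hf : ConvexOn ℝ s f) {a b : E} (ha : a ∈ s) (hb : b ∈ s)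
    (hfa : DifferentiableAt ℝ f a) : fderiv ℝ f a (b - a) ≤ f b - f a := by
  set L : ℝ →ᵃ[ℝ] E := AffineMap.lineMap a b
  have hslope := (hf.comp_affineMap L).le_slope_of_hasDerivAt
    (x := 0) (y := 1) (by simpa [L] using ha) (by simpa [L] using hb) one_pos
    (hfa.hasFDerivAt.comp_hasDerivAt_of_eq 0 AffineMap.hasDerivAt_lineMap (by simp [L]))
  simpa [slope_def_field, L] using hslope

namespace Matrix

variable {ι n R : Type*} [Fintype ι] [Fintype n] [CommSemiring R]

theorem dotProduct_quadForms (z : ι → R) (A : ι → Matrix n n R) (x : n → R) :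
    z ⬝ᵥ (fun k => x ⬝ᵥ A k *ᵥ x) = x ⬝ᵥ (∑ k, z k • A k) *ᵥ x := by
  simp only [dotProduct, sum_mulVec, smul_mulVec, Finset.sum_apply, Pi.smul_apply, smul_eq_mul,
    Finset.mul_sum]
  rw [Finset.sum_comm]
  exact Finset.sum_congr rfl fun _ _ => Finset.sum_congr rfl fun _ _ => by ring

theorem PosSemidef.half_quadForm_sub_dotProduct_le {G : Matrix n n ℝ} (hG : G.PosSemidef)
    {xb f : n → ℝ} (hf : G *ᵥ xb = f) (x : n → ℝ) :
    (1 / 2 : ℝ) * (xb ⬝ᵥ G *ᵥ xb) - f ⬝ᵥ xb ≤ (1 / 2 : ℝ) * (x ⬝ᵥ G *ᵥ x) - f ⬝ᵥ x := by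
  have hsymm : ∀ u v : n → ℝ, u ⬝ᵥ G *ᵥ v = v ⬝ᵥ G *ᵥ u := fun u v => by
    rw [dotProduct_mulVec, ← mulVec_transpose, dotProduct_comm,
      ← conjTranspose_eq_transpose_of_trivial, hG.isHermitian.eq]
  have hsq := hG.dotProduct_mulVec_nonneg (x - xb)
  simp only [star_trivial, mulVec_sub, dotProduct_sub, sub_dotProduct] at hsq
  subst hf
  rw [dotProduct_comm (G *ᵥ xb) xb, dotProduct_comm (G *ᵥ xb) x]
  linarith [hsymm x xb]

end Matrix

theorem global_min_of_canonical_general (n m : ℕ)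
    (A : Fin m → Matrix (Fin n) (Fin n) ℝ)
    (C : Matrix (Fin n) (Fin n) ℝ) (f : Fin n → ℝ)
    (V : (Fin m → ℝ) → ℝ) (hVdiff : Differentiable ℝ V)
    (hVconv : ConvexOn ℝ Set.univ V)
    (Λ : (Fin n → ℝ) → (Fin m → ℝ))
    (hΛ : ∀ x k, Λ x k = (1 / 2 : ℝ) * (x ⬝ᵥ (A k).mulVec x))
    (Q : (Fin n → ℝ) → ℝ)
    (hQ : ∀ x, Q x = (1 / 2 : ℝ) * (x ⬝ᵥ C.mulVec x) + f ⬝ᵥ x)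
    (Pi : (Fin n → ℝ) → ℝ) (hPi : ∀ x, Pi x = V (Λ x) - Q x)
    (xb : Fin n → ℝ) (zb : Fin m → ℝ)
    (hgrad : ∀ v, fderiv ℝ V (Λ xb) v = zb ⬝ᵥ v)
    (G : Matrix (Fin n) (Fin n) ℝ) (hGdef : G = ∑ k, zb k • A k - C)
    (hstat : G.mulVec xb = f) (hGpos : G.PosDef) :
    ∀ x, Pi xb ≤ Pi x := by
  intro x
  have hlinearized : ∀ y, zb ⬝ᵥ Λ y - Q y = (1 / 2 : ℝ) * (y ⬝ᵥ G *ᵥ y) - f ⬝ᵥ y := fun y => by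
    have hΛy : Λ y = (1 / 2 : ℝ) • fun k => y ⬝ᵥ A k *ᵥ y := funext (hΛ y)
    rw [hΛy, dotProduct_smul, dotProduct_quadForms, ← sub_add_cancel (∑ k, zb k • A k) C, ← hGdef,
      add_mulVec, dotProduct_add, hQ, smul_eq_mul]
    ring
  have hconvex := hVconv.fderiv_apply_sub_le (Set.mem_univ (Λ xb)) (Set.mem_univ (Λ x))
    (hVdiff (Λ xb))
  rw [hgrad, dotProduct_sub] at hconvex
  have hquad := hGpos.posSemidef.half_quadForm_sub_dotProduct_le hstat x
  rw [hPi, hPi]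
  linarith [hlinearized x, hlinearized xb]

/-- Min-max (global optimality) part of canonical duality: if `zb = ∇V(Λ(xb))`,
`G(zb) = Σ_k zb_k A_k − C` satisfies `G(zb) xb = f` and `G(zb) ≻ 0`, then `xb` is a
global minimizer of `Pi(x) = V(Λ(x)) − (½ xᵀCx + fᵀx)` on `ℝⁿ`. -/
theorem global_min_of_canonical (n m : ℕ)
    (A : Fin m → Matrix (Fin n) (Fin n) ℝ) (hA : ∀ k, (A k).IsHermitian)
    (C : Matrix (Fin n) (Fin n) ℝ) (hC : C.IsHermitian) (f : Fin n → ℝ)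
    (V : (Fin m → ℝ) → ℝ) (hVdiff : Differentiable ℝ V)
    (hVconv : ConvexOn ℝ Set.univ V)
    (Λ : (Fin n → ℝ) → (Fin m → ℝ))
    (hΛ : ∀ x k, Λ x k = (1 / 2 : ℝ) * (x ⬝ᵥ (A k).mulVec x))
    (Q : (Fin n → ℝ) → ℝ)
    (hQ : ∀ x, Q x = (1 / 2 : ℝ) * (x ⬝ᵥ C.mulVec x) + f ⬝ᵥ x)
    (Pi : (Fin n → ℝ) → ℝ) (hPi : ∀ x, Pi x = V (Λ x) - Q x)
    (xb : Fin n → ℝ) (zb : Fin m → ℝ)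
    (hgrad : ∀ v, fderiv ℝ V (Λ xb) v = zb ⬝ᵥ v)
    (G : Matrix (Fin n) (Fin n) ℝ) (hGdef : G = ∑ k, zb k • A k - C)
    (hstat : G.mulVec xb = f) (hGpos : G.PosDef) :
    ∀ x, Pi xb ≤ Pi x :=
  global_min_of_canonical_general n m A C f V hVdiff hVconv Λ hΛ Q hQ Pi hPi xb zb hgrad G hGdef
    hstat hGpos
end

section
/- With the notation of the previous statement, for any x ∈ ℝⁿ and ζ̄ = ∇V(Λ(x̄)), the inequality Π(x) − Π(x̄) ≥ ½ (x − x̄)ᵀ G(ζ̄) (x − x̄) + (G(ζ̄) x̄ − f)ᵀ (x − x̄) holds, where G(ζ̄) = Σ_k ζ̄_k A_k − C. -/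
/-!
Because `G(ζ̄)` is symmetric, the left-hand side is exactly the second-order expansion of the
quadratic `x ↦ ½ xᵀG(ζ̄)x − fᵀx = ζ̄ᵀΛ(x) − Q(x)` around `x̄`, i.e. it equals
`ζ̄ᵀ(Λ(x) − Λ(x̄)) − (Q(x) − Q(x̄))`. The gradient inequality for the convex function `V` at
`Λ(x̄)` bounds `ζ̄ᵀ(Λ(x) − Λ(x̄))` by `V(Λ(x)) − V(Λ(x̄))`.
-/

open Matrix

theorem ConvexOn.fderiv_apply_sub_le_sub {E : Type*} [NormedAddCommGroup E] [NormedSpace ℝ E]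
    {s : Set E} {f : E → ℝ} {f' : E →L[ℝ] ℝ} {a y : E} (hf : ConvexOn ℝ s f)
    (ha : a ∈ s) (hy : y ∈ s) (hf' : HasFDerivAt f f' a) :
    f' (y - a) ≤ f y - f a := by
  have hline := hf.comp_affineMap (AffineMap.lineMap a y : ℝ →ᵃ[ℝ] E)
  have hderiv : HasDerivAt (f ∘ AffineMap.lineMap (k := ℝ) a y) (f' (y - a)) 0 :=
    (AffineMap.lineMap_apply_zero (k := ℝ) a y ▸ hf').comp_hasDerivAt 0
      AffineMap.hasDerivAt_lineMap
  simpa [slope_def_field] using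
    hline.le_slope_of_hasDerivAt (by simpa) (by simpa) one_pos hderiv

namespace Matrix

variable {ι n R : Type*}

theorem isSymm_sum_smul [Fintype ι] [CommSemiring R] {A : ι → Matrix n n R}
    (hA : ∀ k, (A k).IsSymm) (c : ι → R) : (∑ k, c k • A k).IsSymm := by
  simp only [IsSymm, transpose_sum, transpose_smul, fun k ↦ (hA k).eq]

variable [Fintype n]

theorem dotProduct_sum_smul_mulVec [Fintype ι] [CommSemiring R] (c : ι → R)
    (A : ι → Matrix n n R) (x : n → R) :
    x ⬝ᵥ (∑ k, c k • A k) *ᵥ x = c ⬝ᵥ fun k ↦ x ⬝ᵥ A k *ᵥ x := by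
  simp only [sum_mulVec, smul_mulVec, dotProduct_sum, dotProduct_smul, smul_eq_mul]
  rfl

theorem IsSymm.dotProduct_mulVec_comm [CommSemiring R] {M : Matrix n n R} (hM : M.IsSymm)
    (x y : n → R) : x ⬝ᵥ M *ᵥ y = y ⬝ᵥ M *ᵥ x := by
  rw [dotProduct_mulVec, ← mulVec_transpose, hM.eq, dotProduct_comm]

theorem IsSymm.dotProduct_sub_mulVec_sub [CommRing R] {M : Matrix n n R} (hM : M.IsSymm)
    (x y : n → R) :
    (x - y) ⬝ᵥ M *ᵥ (x - y) + 2 * (M *ᵥ y ⬝ᵥ (x - y)) = x ⬝ᵥ M *ᵥ x - y ⬝ᵥ M *ᵥ y := by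
  rw [dotProduct_comm (M *ᵥ y)]
  simp only [mulVec_sub, dotProduct_sub, sub_dotProduct, hM.dotProduct_mulVec_comm y x]
  ring

end Matrix

/-- The Gao–Strang inequality: with `zb = ∇V(Λ(xb))` and `G(zb) = Σ_k zb_k A_k − C`,
`Pi(x) − Pi(xb) ≥ ½(x−xb)ᵀG(zb)(x−xb) + (G(zb)xb − f)ᵀ(x−xb)` for all `x`. -/
theorem gao_strang_inequality (n m : ℕ)
    (A : Fin m → Matrix (Fin n) (Fin n) ℝ) (hA : ∀ k, (A k).IsHermitian)
    (C : Matrix (Fin n) (Fin n) ℝ) (hC : C.IsHermitian) (f : Fin n → ℝ)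
    (V : (Fin m → ℝ) → ℝ) (hVdiff : Differentiable ℝ V)
    (hVconv : ConvexOn ℝ Set.univ V)
    (Λ : (Fin n → ℝ) → (Fin m → ℝ))
    (hΛ : ∀ x k, Λ x k = (1 / 2 : ℝ) * (x ⬝ᵥ (A k).mulVec x))
    (Q : (Fin n → ℝ) → ℝ)
    (hQ : ∀ x, Q x = (1 / 2 : ℝ) * (x ⬝ᵥ C.mulVec x) + f ⬝ᵥ x)
    (Pi : (Fin n → ℝ) → ℝ) (hPi : ∀ x, Pi x = V (Λ x) - Q x)
    (xb : Fin n → ℝ) (zb : Fin m → ℝ)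
    (hgrad : ∀ v, fderiv ℝ V (Λ xb) v = zb ⬝ᵥ v)
    (G : Matrix (Fin n) (Fin n) ℝ) (hGdef : G = ∑ k, zb k • A k - C) :
    ∀ x, (1 / 2 : ℝ) * ((x - xb) ⬝ᵥ G.mulVec (x - xb)) +
        (G.mulVec xb - f) ⬝ᵥ (x - xb) ≤ Pi x - Pi xb := by
  intro x
  have hG : G.IsSymm := hGdef ▸
    (isSymm_sum_smul (fun k ↦ isHermitian_iff_isSymm.mp (hA k)) zb).sub
      (isHermitian_iff_isSymm.mp hC)
  have hGquad (v : Fin n → ℝ) : (1 / 2 : ℝ) * (v ⬝ᵥ G *ᵥ v) = zb ⬝ᵥ Λ v - (Q v - f ⬝ᵥ v) := by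
    have hΛv : Λ v = (1 / 2 : ℝ) • fun k ↦ v ⬝ᵥ A k *ᵥ v := funext (hΛ v)
    rw [hGdef, sub_mulVec, dotProduct_sub, dotProduct_sum_smul_mulVec, hΛv, dotProduct_smul, hQ,
      smul_eq_mul]
    ring
  have hconv : zb ⬝ᵥ (Λ x - Λ xb) ≤ V (Λ x) - V (Λ xb) :=
    hgrad _ ▸ hVconv.fderiv_apply_sub_le_sub trivial trivial (hVdiff _).hasFDerivAt
  have hexpand := hG.dotProduct_sub_mulVec_sub x xb
  rw [dotProduct_sub] at hconv
  rw [hPi, hPi, sub_dotProduct (G *ᵥ xb), dotProduct_sub f]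
  linarith [hGquad x, hGquad xb]
end
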